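/- arXiv:2107.08480 — 3 statements merged into one kernel-verified Lean document; each statement's English description precedes it below -/
import Mathlib

section
/- Let π be a permutation of {1,...,n} and let e₁ < e₂ < ... < e_k be a chain of matches (each e_i = (x_i, y_i) with x_i < y_i, π⁻¹(x_i) > π⁻¹(y_i), and e_i < e_{i+1} means y_i < x_{i+1} and π⁻¹(x_i) < π⁻¹(y_{i+1})). Then the set of edges {x_i y_i : 1 ≤ i ≤ k} is an induced matching in G(π). -/
def permGraph {n : ℕ} (π : Equiv.Perm (Fin n)) : SimpleGraph (Fin n) where
  Adj u v := (u < v ∧ π.symm v < π.symm u) ∨ (v < u ∧ π.symm u < π.symm v)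
  symm := by constructor; intro u v h; tauto
  loopless := by constructor; intro u h; rcases h with ⟨h, _⟩ | ⟨h, _⟩ <;> exact lt_irrefl u h

def IsMatch {n : ℕ} (π : Equiv.Perm (Fin n)) (x y : Fin n) : Prop :=
  x < y ∧ π.symm y < π.symm x

def MatchLT {n : ℕ} (π : Equiv.Perm (Fin n)) (e e' : Fin n × Fin n) : Prop :=
  e.2 < e'.1 ∧ π.symm e.1 < π.symm e'.2

/-- `M` is an induced matching of `G`: a set of edges of `G` such that any two distinct
edges of `M` share no endpoint and no edge of `G` joins an endpoint of one to an endpoint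
of the other. -/
def IsInducedMatching {V : Type*} (G : SimpleGraph V) (M : Set (Sym2 V)) : Prop :=
  M ⊆ G.edgeSet ∧
    ∀ e ∈ M, ∀ f ∈ M, e ≠ f → ∀ u ∈ e, ∀ v ∈ f, u ≠ v ∧ ¬ G.Adj u v


/-!
Both endpoints of a match `(x, y)` lie in the value interval `[x, y]` and in the position
interval `[π⁻¹ y, π⁻¹ x]`. Hence `e < e'` puts both endpoints of `e` strictly below both endpoints
of `e'` in value and in position, and such pairs are never adjacent in `G(π)`. Along a chain the
relation `<` is transitive, the middle match `(x, y)` supplying the links `x < y` and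
`π⁻¹ y < π⁻¹ x`.
-/

section

variable {n : ℕ} {π : Equiv.Perm (Fin n)}

theorem permGraph_not_adj_of_lt_of_symm_lt {u v : Fin n} (h : u < v)
    (hπ : π.symm u < π.symm v) :
    ¬ (permGraph π).Adj u v := by
  rintro (⟨_, h'⟩ | ⟨h', _⟩)
  · exact hπ.not_gt h'
  · exact h.not_gt h'

theorem IsMatch.adj {x y : Fin n} (h : IsMatch π x y) : (permGraph π).Adj x y :=
  Or.inl h

theorem IsMatch.mem_Icc {x y u : Fin n} (h : IsMatch π x y) (hu : u ∈ s(x, y)) :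
    x ≤ u ∧ u ≤ y := by
  rcases Sym2.mem_iff.mp hu with rfl | rfl
  exacts [⟨le_rfl, h.1.le⟩, ⟨h.1.le, le_rfl⟩]

theorem IsMatch.symm_mem_Icc {x y u : Fin n} (h : IsMatch π x y) (hu : u ∈ s(x, y)) :
    π.symm y ≤ π.symm u ∧ π.symm u ≤ π.symm x := by
  rcases Sym2.mem_iff.mp hu with rfl | rfl
  exacts [⟨h.2.le, le_rfl⟩, ⟨le_rfl, h.2.le⟩]

theorem MatchLT.trans {e e' e'' : Fin n × Fin n} (h : MatchLT π e e')
    (he' : IsMatch π e'.1 e'.2) (h' : MatchLT π e' e'') : MatchLT π e e'' :=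
  ⟨h.1.trans (he'.1.trans h'.1), h.2.trans (he'.2.trans h'.2)⟩

theorem MatchLT.lt_of_mem {e e' : Fin n × Fin n} (h : MatchLT π e e')
    (he : IsMatch π e.1 e.2) (he' : IsMatch π e'.1 e'.2) {u v : Fin n}
    (hu : u ∈ s(e.1, e.2)) (hv : v ∈ s(e'.1, e'.2)) : u < v ∧ π.symm u < π.symm v :=
  ⟨(he.mem_Icc hu).2.trans_lt (h.1.trans_le (he'.mem_Icc hv).1),
    (he.symm_mem_Icc hu).2.trans_lt (h.2.trans_le (he'.symm_mem_Icc hv).1)⟩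

theorem MatchLT.not_adj_of_mem {e e' : Fin n × Fin n} (h : MatchLT π e e')
    (he : IsMatch π e.1 e.2) (he' : IsMatch π e'.1 e'.2) {u v : Fin n}
    (hu : u ∈ s(e.1, e.2)) (hv : v ∈ s(e'.1, e'.2)) : u ≠ v ∧ ¬ (permGraph π).Adj u v :=
  have ⟨hlt, hπ⟩ := h.lt_of_mem he he' hu hv
  ⟨hlt.ne, permGraph_not_adj_of_lt_of_symm_lt hlt hπ⟩

theorem matchLT_of_chain {k : ℕ} {e : ℕ → Fin n × Fin n}
    (hm : ∀ i < k, IsMatch π (e i).1 (e i).2)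
    (hc : ∀ i, i + 1 < k → MatchLT π (e i) (e (i + 1))) {i j : ℕ} (hij : i < j) (hj : j < k) :
    MatchLT π (e i) (e j) := by
  induction j, hij using Nat.le_induction with
  | base => exact hc i hj
  | succ j hij ih => exact (ih (by omega)).trans (hm j (by omega)) (hc j hj)

end

/-- The edges of a chain of matches `e₁ < e₂ < ⋯ < e_k` form an induced matching in `G(π)`. -/
theorem stmt_4 {n : ℕ} (π : Equiv.Perm (Fin n)) (k : ℕ) (e : ℕ → Fin n × Fin n)
    (hm : ∀ i < k, IsMatch π (e i).1 (e i).2)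
    (hc : ∀ i, i + 1 < k → MatchLT π (e i) (e (i + 1))) :
    IsInducedMatching (permGraph π) {s | ∃ i < k, s = s((e i).1, (e i).2)} := by
  refine ⟨fun s ⟨i, hi, hs⟩ => hs ▸ (hm i hi).adj, ?_⟩
  rintro s ⟨i, hi, rfl⟩ t ⟨j, hj, rfl⟩ hst u hu v hv
  rcases lt_or_gt_of_ne (fun hij : i = j => hst (hij ▸ rfl)) with hij | hji
  · exact (matchLT_of_chain hm hc hij hj).not_adj_of_mem (hm i hi) (hm j hj) hu hv
  · have ⟨hne, hnadj⟩ := (matchLT_of_chain hm hc hji hi).not_adj_of_mem (hm j hj) (hm i hi) hv hu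
    exact ⟨hne.symm, fun hadj => hnadj hadj.symm⟩
end

section
/- Let τ be a family of trapezoids with all coordinates distinct, and let e₁ < e₂ < ... < e_k be a chain of matches (where e < e' iff max of the four right coordinates of e is less than min of the four corresponding left coordinates of e' on both axes). Then the set of edges {A_iB_i : e_i = (A_i, B_i)} is an induced matching in the trapezoid graph G(τ). -/
structure Trapezoid where
  x1 : ℝ
  x2 : ℝ
  y1 : ℝ
  y2 : ℝ
  hx : x1 ≤ x2
  hy : y1 ≤ y2

def SegCross (a b c d : ℝ) : Prop := (a - c) * (b - d) < 0

def TrapIntersect (A B : Trapezoid) : Prop :=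
  SegCross A.x1 A.y2 B.x1 B.y2 ∨ SegCross A.x1 A.y2 B.x2 B.y1 ∨
    SegCross A.x2 A.y1 B.x1 B.y2 ∨ SegCross A.x2 A.y1 B.x2 B.y1

/-- The trapezoid graph `G(τ)`: vertices are the trapezoids of `τ`, edges are intersecting
pairs. -/
def trapGraph (τ : Set Trapezoid) : SimpleGraph τ where
  Adj A B := A ≠ B ∧ TrapIntersect A B
  symm := by
    constructor
    intro A B ⟨hne, h⟩
    refine ⟨hne.symm, ?_⟩
    rcases h with h | h | h | h
    · exact Or.inl (by unfold SegCross at *; nlinarith)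
    · exact Or.inr (Or.inr (Or.inl (by unfold SegCross at *; nlinarith)))
    · exact Or.inr (Or.inl (by unfold SegCross at *; nlinarith))
    · exact Or.inr (Or.inr (Or.inr (by unfold SegCross at *; nlinarith)))
  loopless := by constructor; intro A h; exact h.1 rfl

def DistinctCoords (τ : Set Trapezoid) : Prop :=
  ∀ A ∈ τ, ∀ B ∈ τ, A ≠ B →
    ([A.x1, A.x2, B.x1, B.x2] : List ℝ).Pairwise (· ≠ ·) ∧
    ([A.y1, A.y2, B.y1, B.y2] : List ℝ).Pairwise (· ≠ ·)

def TrapMatch (A B : Trapezoid) : Prop :=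
  A.x2 < B.x2 ∧ (B.x1 ≤ A.x2 ∨ B.y1 ≤ A.y2)

def TrapMatchLT (e e' : Trapezoid × Trapezoid) : Prop :=
  max e.1.x2 e.2.x2 < min e'.1.x1 e'.2.x1 ∧ max e.1.y2 e.2.y2 < min e'.1.y1 e'.2.y1

/-!
Consecutive matches of the chain are separated on both lines, and this separation is
transitive, so for `i < j` every trapezoid of `eᵢ` ends, on both lines, before any trapezoid of
`eⱼ` starts; such trapezoids are distinct and cannot intersect. Each match `(A, B)` is itself an
edge: `A.x₂ < B.x₂` while `B` starts before `A` ends on one of the two lines, so a side of `A`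
crosses a side of `B`, strictly because the coordinates are distinct.
-/

theorem Nat.rel_of_forall_rel_succ_of_lt_of_lt {β : Type*} (r : β → β → Prop) [IsTrans β r]
    {f : ℕ → β} {k : ℕ} (h : ∀ n, n + 1 < k → r (f n) (f (n + 1))) ⦃a b : ℕ⦄ (hab : a < b)
    (hbk : b < k) : r (f a) (f b) := by
  induction hab with
  | refl => exact h a hbk
  | step _ ih => exact _root_.trans (ih (by omega)) (h _ hbk)

namespace Trapezoid

def Precedes (u v : Trapezoid) : Prop :=
  u.x2 < v.x1 ∧ u.y2 < v.y1

theorem Precedes.ne {u v : Trapezoid} (h : u.Precedes v) : u ≠ v := by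
  rintro rfl
  exact (h.1.trans_le u.hx).false

theorem Precedes.not_trapIntersect {u v : Trapezoid} (h : u.Precedes v) :
    ¬ TrapIntersect u v := by
  obtain ⟨hx, hy⟩ := h
  have := u.hx; have := u.hy; have := v.hx; have := v.hy
  rintro (h | h | h | h) <;> unfold SegCross at h <;> nlinarith

end Trapezoid

theorem TrapMatchLT.trans {p q r : Trapezoid × Trapezoid} (hpq : TrapMatchLT p q)
    (hqr : TrapMatchLT q r) : TrapMatchLT p r := by
  obtain ⟨hpqx, hpqy⟩ := hpq
  obtain ⟨hqrx, hqry⟩ := hqr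
  have := q.1.hx; have := q.1.hy
  have := min_le_left q.1.x1 q.2.x1; have := le_max_left q.1.x2 q.2.x2
  have := min_le_left q.1.y1 q.2.y1; have := le_max_left q.1.y2 q.2.y2
  exact ⟨by linarith, by linarith⟩

instance : IsTrans (Trapezoid × Trapezoid) TrapMatchLT :=
  ⟨fun _ _ _ => TrapMatchLT.trans⟩

theorem TrapMatchLT.precedes {p q : Trapezoid × Trapezoid} (h : TrapMatchLT p q)
    {u v : Trapezoid} (hu : u = p.1 ∨ u = p.2) (hv : v = q.1 ∨ v = q.2) : u.Precedes v := by
  obtain ⟨hx, hy⟩ := h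
  have hux : u.x2 ≤ max p.1.x2 p.2.x2 := by rcases hu with rfl | rfl <;> simp
  have huy : u.y2 ≤ max p.1.y2 p.2.y2 := by rcases hu with rfl | rfl <;> simp
  have hvx : min q.1.x1 q.2.x1 ≤ v.x1 := by rcases hv with rfl | rfl <;> simp
  have hvy : min q.1.y1 q.2.y1 ≤ v.y1 := by rcases hv with rfl | rfl <;> simp
  exact ⟨by linarith, by linarith⟩

theorem TrapMatch.ne {A B : Trapezoid} (h : TrapMatch A B) : A ≠ B := by
  rintro rfl
  exact lt_irrefl _ h.1

theorem TrapMatch.trapIntersect {A B : Trapezoid} (h : TrapMatch A B) (hx : A.x2 ≠ B.x1)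
    (hy : A.y2 ≠ B.y1) (hy' : A.y1 ≠ B.y2) : TrapIntersect A B := by
  obtain ⟨hx2, hstart | hstart⟩ := h
  · have hx1 : B.x1 < A.x2 := hstart.lt_of_ne hx.symm
    rcases hy'.lt_or_gt with hlt | hgt
    · exact Or.inr (Or.inr (Or.inl (mul_neg_of_pos_of_neg (by linarith) (by linarith))))
    · have := B.hy
      exact Or.inr (Or.inr (Or.inr (mul_neg_of_neg_of_pos (by linarith) (by linarith))))
  · have hy1 : B.y1 < A.y2 := hstart.lt_of_ne hy.symm
    have := A.hx
    exact Or.inr (Or.inl (mul_neg_of_neg_of_pos (by linarith) (by linarith)))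

theorem trapGraph_adj_of_trapMatch {τ : Set Trapezoid} (hτ : DistinctCoords τ) {A B : τ}
    (h : TrapMatch A B) : (trapGraph τ).Adj A B := by
  have hne : (A : Trapezoid) ≠ B := h.ne
  obtain ⟨hpx, hpy⟩ := hτ A A.2 B B.2 hne
  simp only [List.pairwise_cons, List.mem_cons, List.not_mem_nil, or_false,
    forall_eq_or_imp, forall_eq] at hpx hpy
  exact ⟨fun hAB => hne (congrArg Subtype.val hAB),
    h.trapIntersect hpx.2.1.1 hpy.2.1.1 hpy.1.2.2⟩

theorem trapGraph_ne_and_not_adj_of_trapMatchLT {τ : Set Trapezoid} {p q : τ × τ}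
    (h : TrapMatchLT ((p.1 : Trapezoid), (p.2 : Trapezoid))
      ((q.1 : Trapezoid), (q.2 : Trapezoid)))
    {u v : τ} (hu : u ∈ s(p.1, p.2)) (hv : v ∈ s(q.1, q.2)) :
    u ≠ v ∧ ¬ (trapGraph τ).Adj u v := by
  rw [Sym2.mem_iff] at hu hv
  have huv : (u : Trapezoid).Precedes v :=
    h.precedes (hu.imp (congrArg Subtype.val) (congrArg Subtype.val))
      (hv.imp (congrArg Subtype.val) (congrArg Subtype.val))
  exact ⟨fun h => huv.ne (congrArg Subtype.val h), fun hadj => huv.not_trapIntersect hadj.2⟩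

/-- The edges coming from a chain of matches `e₁ < ⋯ < e_k` form an induced matching in
the trapezoid graph `G(τ)`. -/
theorem stmt_12 (τ : Set Trapezoid) (hτ : DistinctCoords τ) (k : ℕ)
    (e : ℕ → τ × τ)
    (hm : ∀ i < k, TrapMatch ((e i).1 : Trapezoid) ((e i).2 : Trapezoid))
    (hc : ∀ i, i + 1 < k →
      TrapMatchLT (((e i).1 : Trapezoid), ((e i).2 : Trapezoid))
        (((e (i + 1)).1 : Trapezoid), ((e (i + 1)).2 : Trapezoid))) :
    IsInducedMatching (trapGraph τ) {s | ∃ i < k, s = s((e i).1, (e i).2)} := by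
  have separated : ∀ i j, i < j → j < k → ∀ u ∈ s((e i).1, (e i).2),
      ∀ v ∈ s((e j).1, (e j).2), u ≠ v ∧ ¬ (trapGraph τ).Adj u v :=
    fun i j hij hjk _ hu _ hv =>
    trapGraph_ne_and_not_adj_of_trapMatchLT
      (Nat.rel_of_forall_rel_succ_of_lt_of_lt TrapMatchLT hc hij hjk) hu hv
  refine ⟨?_, ?_⟩
  · rintro _ ⟨i, hi, rfl⟩
    exact trapGraph_adj_of_trapMatch hτ (hm i hi)
  · rintro _ ⟨i, hi, rfl⟩ _ ⟨j, hj, rfl⟩ hst u hu v hv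
    rcases Nat.lt_or_gt_of_ne (fun hij : i = j => hst (hij ▸ rfl)) with hij | hji
    · exact separated i j hij hj u hu v hv
    · obtain ⟨hvu, hnadj⟩ := separated j i hji hi v hv u hu
      exact ⟨hvu.symm, fun hadj => hnadj hadj.symm⟩
end

section
/- Let π be a permutation of {1,...,n}. In Procedure buildAllMatches, when the outer loop variable a equals i, exactly the nodes π(n), π(n−1), ..., π(i+1) have been removed from the linked list; consequently, for every remaining node p with p > π(i), the pair (π(i), p) is a match (i.e., π(i) < p and π⁻¹(π(i)) = i > π⁻¹(p)), and every p with (π(i), p) a match is still in the list. -/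
/-- In Procedure `buildAllMatches`, when the outer loop variable `a` equals `i`, exactly the
nodes `π(n), …, π(i+1)` have been removed from the linked list, i.e. the removed set is
`{π(j) : j > i}`.  Consequently: every remaining node `p` with `p > π(i)` forms a match
`(π(i), p)`, and conversely every `p` with `(π(i), p)` a match is still in the list. -/
theorem stmt_14 {n : ℕ} (π : Equiv.Perm (Fin n)) (i p : Fin n) :
    (p ∉ {x : Fin n | ∃ j : Fin n, i < j ∧ π j = x} ∧ π i < p) ↔ IsMatch π (π i) p := by
  constructor
  · rintro ⟨hnot, hlt⟩
    refine ⟨hlt, ?_⟩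
    simp only [Equiv.symm_apply_apply]
    rcases lt_trichotomy (π.symm p) i with h | h | h
    · exact h
    · exact absurd (by rw [← h, Equiv.apply_symm_apply]) hlt.ne'
    · exact absurd ⟨π.symm p, h, π.apply_symm_apply p⟩ hnot
  · rintro ⟨hlt, hsym⟩
    simp only [Equiv.symm_apply_apply] at hsym
    refine ⟨?_, hlt⟩
    rintro ⟨j, hj, rfl⟩
    simp only [Equiv.symm_apply_apply] at hsym
    exact absurd hj (not_lt.2 hsym.le)
end
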